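/- Let n ≥ 2, let R be a commutative ℚ-algebra, and let ϖ_1,…,ϖ_{n−1} ∈ R satisfy the Peterson relations, with ϖ_0 = ϖ_n = 0. Then for all J, K ⊆ {1,…,n−1} there exist nonnegative rational numbers c_L, indexed by the subsets L with J ∪ K ⊆ L ⊆ {1,…,n−1} and |L| = |J| + |K|, such that (∏_{j∈J} ϖ_j)·(∏_{k∈K} ϖ_k) = Σ_L c_L · ∏_{i∈L} ϖ_i. In particular, the product of any two square-free monomials in the ϖ_i is a nonnegative rational linear combination of square-free monomials. -/

import Mathlib

/-!
Multiplying a square-free monomial `ϖ_L` by `ϖ_k` with `k ∉ L` gives `ϖ_{L ∪ {k}}`. If `k ∈ L`,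
let `p < k < q` be the neighbours of the maximal run of `L` through `k`. Multiplying the relation
at each `j ∈ L` by `ϖ_{L \ {j}}` gives `ϖ_{j-1} ϖ_L + ϖ_{j+1} ϖ_L = 2 ϖ_j ϖ_L`, so `i ↦ ϖ_i ϖ_L` is
affine on `[p, q]` and `ϖ_k ϖ_L` is a convex combination of `ϖ_p ϖ_L` and `ϖ_q ϖ_L`. Each of these
vanishes (`p = 0`, `q = n`) or is a square-free monomial on `L ∪ {p}`, resp. `L ∪ {q}`. Hence
multiplication by `ϖ_k` maps the cone spanned by the monomials on supports of size `m` containing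
`A` into the cone of supports of size `m + 1` containing `A ∪ {k}`; induct on `K`.
-/

open Finset

theorem nsmul_eq_of_add_eq_two_nsmul {M : Type*} [AddCommGroup M] (f : ℕ → M) {N : ℕ}
    (hf : ∀ i, i + 2 ≤ N → f i + f (i + 2) = 2 • f (i + 1)) {s : ℕ} (hs : s ≤ N) :
    N • f s = (N - s) • f 0 + s • f N := by
  have affine : ∀ i ≤ N, f i = f 0 + i • (f 1 - f 0) := by
    intro i
    induction i using Nat.twoStepInduction with
    | zero => simp
    | one => simp
    | more i ih₀ ih₁ =>
      intro hi
      have := hf i hi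
      rw [ih₀ (by omega), ih₁ (by omega)] at this
      linear_combination (norm := module) this
  obtain ⟨t, rfl⟩ := Nat.exists_eq_add_of_le hs
  rw [affine s hs, affine (s + t) le_rfl, Nat.add_sub_cancel_left]
  module

theorem eq_smul_add_smul_of_add_eq_two_nsmul {M : Type*} [AddCommGroup M] [Module ℚ M]
    (f : ℕ → M) {N : ℕ} (hN : N ≠ 0)
    (hf : ∀ i, i + 2 ≤ N → f i + f (i + 2) = 2 • f (i + 1)) {s : ℕ} (hs : s ≤ N) :
    f s = ((N - s : ℕ) / N : ℚ) • f 0 + ((s : ℚ) / N) • f N := by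
  have hN' : (N : ℚ) ≠ 0 := Nat.cast_ne_zero.mpr hN
  apply smul_right_injective M hN'
  simp only [smul_add, smul_smul, mul_div_cancel₀ _ hN', Nat.cast_smul_eq_nsmul]
  exact nsmul_eq_of_add_eq_two_nsmul f hf hs

theorem Finset.exists_lt_lt_notMem_of_mem (L : Finset ℕ) (h0 : 0 ∉ L) {k : ℕ} (hk : k ∈ L) :
    ∃ p q, p < k ∧ k < q ∧ p ∉ L ∧ q ∉ L ∧ ∀ i, p < i → i < q → i ∈ L := by
  have hq : ∃ q, k < q ∧ q ∉ L :=
    ⟨k + 1 + L.sup id, by omega, fun h => by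
      have := L.le_sup (f := id) h
      simp only [id] at this
      omega⟩
  have hp : Nat.findGreatest (· ∉ L) k ∉ L :=
    Nat.findGreatest_spec (P := (· ∉ L)) (Nat.zero_le k) h0
  refine ⟨Nat.findGreatest (· ∉ L) k, Nat.find hq, ?_, (Nat.find_spec hq).1, hp,
    (Nat.find_spec hq).2, fun i hpi hiq => ?_⟩
  · exact (Nat.findGreatest_le k).lt_of_ne fun h => hp (h.symm ▸ hk)
  · rcases le_or_gt i k with hik | hki
    · exact not_not.mp (Nat.findGreatest_is_greatest hpi hik)
    · by_contra hi
      exact Nat.find_min hq hiq ⟨hki, hi⟩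

def squarefreeSupports (n : ℕ) (A : Finset ℕ) (m : ℕ) : Finset (Finset ℕ) :=
  (Icc 1 (n - 1)).powerset.filter (fun L => A ⊆ L ∧ L.card = m)

theorem mem_squarefreeSupports {n : ℕ} {A L : Finset ℕ} {m : ℕ} :
    L ∈ squarefreeSupports n A m ↔ L ⊆ Icc 1 (n - 1) ∧ A ⊆ L ∧ L.card = m := by
  rw [squarefreeSupports, mem_filter, mem_powerset]

theorem squarefreeSupports_anti {n : ℕ} {A B : Finset ℕ} (h : A ⊆ B) (m : ℕ) :
    squarefreeSupports n B m ⊆ squarefreeSupports n A m := fun _ hL => by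
  rw [mem_squarefreeSupports] at hL ⊢
  exact ⟨hL.1, h.trans hL.2.1, hL.2.2⟩

section Cone

variable {R : Type*} [CommRing R] [Algebra ℚ R]

def monomialCone (ϖ : ℕ → R) (S : Finset (Finset ℕ)) : PointedCone ℚ R :=
  PointedCone.hull ℚ ((fun L => ∏ i ∈ L, ϖ i) '' S)

theorem monomialCone_mono (ϖ : ℕ → R) {S T : Finset (Finset ℕ)} (h : S ⊆ T) :
    monomialCone ϖ S ≤ monomialCone ϖ T :=
  Submodule.span_mono (Set.image_mono (coe_subset.mpr h))

theorem prod_mem_monomialCone (ϖ : ℕ → R) {S : Finset (Finset ℕ)} {L : Finset ℕ} (hL : L ∈ S) :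
    ∏ i ∈ L, ϖ i ∈ monomialCone ϖ S :=
  PointedCone.subset_hull ⟨L, hL, rfl⟩

end Cone

structure PetersonRelations {R : Type*} [CommRing R] (n : ℕ) (ϖ : ℕ → R) : Prop where
  zero : ϖ 0 = 0
  top : ϖ n = 0
  rel : ∀ i : ℕ, 1 ≤ i → i ≤ n - 1 → ϖ i * (2 * ϖ i - ϖ (i - 1) - ϖ (i + 1)) = 0

namespace PetersonRelations

variable {R : Type*} [CommRing R] {n : ℕ} {ϖ : ℕ → R}

theorem mul_prod_add_mul_prod (hϖ : PetersonRelations n ϖ) {L : Finset ℕ}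
    (hL : L ⊆ Icc 1 (n - 1)) {j : ℕ} (hj : j ∈ L) :
    ϖ (j - 1) * ∏ i ∈ L, ϖ i + ϖ (j + 1) * ∏ i ∈ L, ϖ i = 2 • (ϖ j * ∏ i ∈ L, ϖ i) := by
  obtain ⟨hj₁, hj₂⟩ := mem_Icc.mp (hL hj)
  rw [← mul_prod_erase L ϖ hj]
  linear_combination (-∏ i ∈ L.erase j, ϖ i) * hϖ.rel j hj₁ hj₂

variable [Algebra ℚ R]

theorem mul_prod_mem_monomialCone_of_notMem (hϖ : PetersonRelations n ϖ) {L : Finset ℕ}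
    (hL : L ⊆ Icc 1 (n - 1)) {p : ℕ} (hp : p ≤ n) (hpL : p ∉ L) :
    ϖ p * ∏ i ∈ L, ϖ i ∈ monomialCone ϖ (squarefreeSupports n (insert p L) (L.card + 1)) := by
  obtain rfl | rfl | hp' : p = 0 ∨ p = n ∨ p ∈ Icc 1 (n - 1) := by
    rw [mem_Icc]; omega
  · simp [hϖ.zero]
  · simp [hϖ.top]
  · rw [← prod_insert hpL]
    exact prod_mem_monomialCone ϖ <| mem_squarefreeSupports.mpr
      ⟨insert_subset hp' hL, subset_rfl, card_insert_of_notMem hpL⟩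

theorem mul_prod_mem_monomialCone_of_mem (hϖ : PetersonRelations n ϖ) {L : Finset ℕ}
    (hL : L ⊆ Icc 1 (n - 1)) {k : ℕ} (hk : k ∈ L) :
    ϖ k * ∏ i ∈ L, ϖ i ∈ monomialCone ϖ (squarefreeSupports n L (L.card + 1)) := by
  obtain ⟨p, q, hpk, hkq, hpL, hqL, hrun⟩ :=
    L.exists_lt_lt_notMem_of_mem (fun h => by simpa using hL h) hk
  have hqn : q ≤ n := by
    have := mem_Icc.mp (hL (hrun (q - 1) (by omega) (by omega)))
    omega
  set f : ℕ → R := fun i => ϖ (p + i) * ∏ i ∈ L, ϖ i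
  have hf : ∀ i, i + 2 ≤ q - p → f i + f (i + 2) = 2 • f (i + 1) := fun i hi => by
    simpa [f, add_assoc] using
      hϖ.mul_prod_add_mul_prod hL (hrun (p + i + 1) (by omega) (by omega))
  have hinterp := eq_smul_add_smul_of_add_eq_two_nsmul f (N := q - p) (by omega) hf
    (s := k - p) (by omega)
  simp only [f, add_zero, Nat.add_sub_cancel' hpk.le, Nat.add_sub_cancel' (hpk.trans hkq).le]
    at hinterp
  have hcone : ∀ r ≤ n, r ∉ L →
      ϖ r * ∏ i ∈ L, ϖ i ∈ monomialCone ϖ (squarefreeSupports n L (L.card + 1)) :=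
    fun r hr hrL => monomialCone_mono ϖ (squarefreeSupports_anti (subset_insert r L) _)
      (hϖ.mul_prod_mem_monomialCone_of_notMem hL hr hrL)
  rw [hinterp]
  exact add_mem (PointedCone.smul_mem _ (by positivity) (hcone p (by omega) hpL))
    (PointedCone.smul_mem _ (by positivity) (hcone q hqn hqL))

theorem mul_prod_mem_monomialCone (hϖ : PetersonRelations n ϖ) {L : Finset ℕ}
    (hL : L ⊆ Icc 1 (n - 1)) {k : ℕ} (hk : k ∈ Icc 1 (n - 1)) :
    ϖ k * ∏ i ∈ L, ϖ i ∈ monomialCone ϖ (squarefreeSupports n (insert k L) (L.card + 1)) := by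
  by_cases hkL : k ∈ L
  · rw [insert_eq_of_mem hkL]
    exact hϖ.mul_prod_mem_monomialCone_of_mem hL hkL
  · exact hϖ.mul_prod_mem_monomialCone_of_notMem hL (by simp at hk; omega) hkL

theorem mul_mem_monomialCone (hϖ : PetersonRelations n ϖ) {A : Finset ℕ} {m k : ℕ}
    (hk : k ∈ Icc 1 (n - 1)) {x : R} (hx : x ∈ monomialCone ϖ (squarefreeSupports n A m)) :
    ϖ k * x ∈ monomialCone ϖ (squarefreeSupports n (insert k A) (m + 1)) := by
  induction hx using Submodule.span_induction with
  | mem x hx =>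
    obtain ⟨L, hL, rfl⟩ := hx
    obtain ⟨hLn, hAL, rfl⟩ := mem_squarefreeSupports.mp hL
    exact monomialCone_mono ϖ (squarefreeSupports_anti (insert_subset_insert k hAL) _)
      (hϖ.mul_prod_mem_monomialCone hLn hk)
  | zero => simp
  | add x y _ _ hx hy => simpa [mul_add] using add_mem hx hy
  | smul c x _ hx => simpa [mul_smul_comm] using Submodule.smul_mem _ c hx

theorem prod_mul_prod_mem_monomialCone (hϖ : PetersonRelations n ϖ) {J K : Finset ℕ}
    (hJ : J ⊆ Icc 1 (n - 1)) (hK : K ⊆ Icc 1 (n - 1)) :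
    (∏ j ∈ J, ϖ j) * ∏ k ∈ K, ϖ k ∈
      monomialCone ϖ (squarefreeSupports n (J ∪ K) (J.card + K.card)) := by
  induction K using Finset.induction_on with
  | empty =>
    simpa using prod_mem_monomialCone ϖ (mem_squarefreeSupports.mpr ⟨hJ, subset_rfl, rfl⟩)
  | insert k K hkK ih =>
    rw [prod_insert hkK, mul_left_comm, union_insert, card_insert_of_notMem hkK, ← add_assoc]
    exact hϖ.mul_mem_monomialCone (hK (mem_insert_self k K)) (ih ((subset_insert k K).trans hK))

end PetersonRelations

theorem peterson_product_nonneg_combination (n : ℕ)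
    {R : Type*} [CommRing R] [Algebra ℚ R] (ϖ : ℕ → R)
    (h0 : ϖ 0 = 0) (htop : ϖ n = 0)
    (hrel : ∀ i : ℕ, 1 ≤ i → i ≤ n - 1 → ϖ i * (2 * ϖ i - ϖ (i - 1) - ϖ (i + 1)) = 0)
    (J K : Finset ℕ) (hJ : J ⊆ Finset.Icc 1 (n - 1)) (hK : K ⊆ Finset.Icc 1 (n - 1)) :
    ∃ c : Finset ℕ → ℚ, (∀ L, 0 ≤ c L) ∧
      (∏ j ∈ J, ϖ j) * (∏ k ∈ K, ϖ k) =
        ∑ L ∈ (Finset.Icc 1 (n - 1)).powerset.filter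
            (fun L => J ∪ K ⊆ L ∧ L.card = J.card + K.card),
          c L • ∏ i ∈ L, ϖ i := by
  obtain ⟨c, hc⟩ := (Submodule.mem_span_image_finset_iff_exists_fun' _).mp
    (PetersonRelations.prod_mul_prod_mem_monomialCone ⟨h0, htop, hrel⟩ hJ hK)
  exact ⟨fun L => c L, fun L => (c L).2, hc.symm⟩
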